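/- (Convergence of the conforming minimal residual method, classical regularity.) Let n ≥ 1, 0 < λ ≤ Λ, γ ≥ 0, μ ≥ 0, C > 0, let Ω ⊂ ℝⁿ be a nonempty bounded open set, let f ∈ Lⁿ(Ω), let g : ∂Ω → ℝ be bounded, and let F = F(x,r,p,M) satisfy for almost every x ∈ Ω the structure condition 𝒫⁻_{λ,Λ}(M−N) − γ|p−q| − μ·max(s−r,0) ≤ F(x,r,p,M) − F(x,s,q,N) ≤ 𝒫⁺_{λ,Λ}(M−N) + γ|p−q| + μ·max(r−s,0) for all r, s ∈ ℝ, p, q ∈ ℝⁿ and symmetric M, N. Let X denote the space of twice continuously differentiable functions ℝⁿ → ℝ, define Ψ(v) := sup_{x ∈ ∂Ω} |g(x) − v(x)| + C·‖f − F[v]‖_{Lⁿ(Ω)} for v ∈ X, and set N(w) := sup_{x ∈ closure(Ω)} |w(x)| + ‖w‖_{Lⁿ(Ω)} + ‖∇w‖_{Lⁿ(Ω)} + ‖D²w‖_{Lⁿ(Ω)}. Assume: (i) inf_{v ∈ X} Ψ(v) = 0; (ii) (V_j)_{j∈ℕ} is a sequence of subsets of X such that for every v ∈ X, inf_{v_j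 ∈ V_j} N(v − v_j) → 0 as j → ∞; and (iii) for each j there is u_j ∈ V_j with Ψ(u_j) = inf_{v_j ∈ V_j} Ψ(v_j). Then lim_{j→∞} Ψ(u_j) = 0. If, moreover, u : closure(Ω) → ℝ satisfies the stability bound sup_{Ω} |u − v| ≤ Ψ(v) for every v ∈ X, then sup_{Ω} |u − u_j| → 0 as j → ∞. -/

import Mathlib

open MeasureTheory Matrix
open scoped ENNReal NNReal

/-- The set `S(λ,Λ)` of symmetric `n×n` matrices with `λI ≤ A ≤ ΛI` in the Loewner order. -/
def pucciSet (n : ℕ) (lam Lam : ℝ) : Set (Matrix (Fin n) (Fin n) ℝ) :=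
  {A | A.IsSymm ∧ (A - lam • (1 : Matrix (Fin n) (Fin n) ℝ)).PosSemidef ∧
       (Lam • (1 : Matrix (Fin n) (Fin n) ℝ) - A).PosSemidef}

/-- The Pucci extremal operator `𝒫⁺_{λ,Λ}(M) = sup_{A ∈ S(λ,Λ)} (−tr(A·M))`. -/
noncomputable def pucciPlus (n : ℕ) (lam Lam : ℝ) (M : Matrix (Fin n) (Fin n) ℝ) : ℝ :=
  sSup ((fun A => -(A * M).trace) '' pucciSet n lam Lam)

/-- The Pucci extremal operator `𝒫⁻_{λ,Λ}(M) = inf_{A ∈ S(λ,Λ)} (−tr(A·M))`. -/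
noncomputable def pucciMinus (n : ℕ) (lam Lam : ℝ) (M : Matrix (Fin n) (Fin n) ℝ) : ℝ :=
  sInf ((fun A => -(A * M).trace) '' pucciSet n lam Lam)

/-- The Frobenius norm of a matrix. -/
noncomputable def frobNorm (n : ℕ) (M : Matrix (Fin n) (Fin n) ℝ) : ℝ :=
  Real.sqrt (∑ i, ∑ j, (M i j) ^ 2)

/-- The Hessian matrix `D²v(x)` of `v : ℝⁿ → ℝ`, with entries the second partial
derivatives `∂ᵢ∂ⱼ v (x)`. -/
noncomputable def hessianMatrix (n : ℕ) (v : EuclideanSpace ℝ (Fin n) → ℝ)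
    (x : EuclideanSpace ℝ (Fin n)) : Matrix (Fin n) (Fin n) ℝ :=
  Matrix.of fun i j =>
    fderiv ℝ (fun y => fderiv ℝ v y (EuclideanSpace.single j 1)) x (EuclideanSpace.single i 1)

/-- The nonlinear residual `F[v](x) = F(x, v(x), ∇v(x), D²v(x))` of `v`. -/
noncomputable def opApply (n : ℕ)
    (F : EuclideanSpace ℝ (Fin n) → ℝ → EuclideanSpace ℝ (Fin n) →
      Matrix (Fin n) (Fin n) ℝ → ℝ)
    (v : EuclideanSpace ℝ (Fin n) → ℝ) (x : EuclideanSpace ℝ (Fin n)) : ℝ :=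
  F x (v x) (gradient v x) (hessianMatrix n v x)

/-- The minimal residual functional `Ψ(v) = sup_{∂Ω} |g − v| + C‖f − F[v]‖_{Lⁿ(Ω)}`. -/
noncomputable def Psi (n : ℕ) (Ω : Set (EuclideanSpace ℝ (Fin n))) (C : ℝ)
    (g f : EuclideanSpace ℝ (Fin n) → ℝ)
    (F : EuclideanSpace ℝ (Fin n) → ℝ → EuclideanSpace ℝ (Fin n) →
      Matrix (Fin n) (Fin n) ℝ → ℝ)
    (v : EuclideanSpace ℝ (Fin n) → ℝ) : ℝ :=
  sSup ((fun x => |g x - v x|) '' frontier Ω) +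
    C * (eLpNorm (fun x => f x - opApply n F v x) n (volume.restrict Ω)).toReal

/-- The strong norm `N(w) = sup_{closure Ω} |w| + ‖w‖_{Lⁿ} + ‖∇w‖_{Lⁿ} + ‖D²w‖_{Lⁿ}`. -/
noncomputable def strongNorm (n : ℕ) (Ω : Set (EuclideanSpace ℝ (Fin n)))
    (w : EuclideanSpace ℝ (Fin n) → ℝ) : ℝ :=
  sSup ((fun x => |w x|) '' closure Ω) +
    (eLpNorm w n (volume.restrict Ω)).toReal +
    (eLpNorm (fun x => ‖gradient w x‖) n (volume.restrict Ω)).toReal +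
    (eLpNorm (fun x => frobNorm n (hessianMatrix n w x)) n (volume.restrict Ω)).toReal


lemma frobNorm_nonneg (n : ℕ) (M : Matrix (Fin n) (Fin n) ℝ) : 0 ≤ frobNorm n M :=
  Real.sqrt_nonneg _

lemma abs_entry_le_frobNorm (n : ℕ) (M : Matrix (Fin n) (Fin n) ℝ) (i j : Fin n) :
    |M i j| ≤ frobNorm n M := by
  rw [← Real.sqrt_sq_eq_abs]
  apply Real.sqrt_le_sqrt
  calc M i j ^ 2 ≤ ∑ j', (M i j') ^ 2 :=
        Finset.single_le_sum (fun k _ => sq_nonneg (M i k)) (Finset.mem_univ j)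
    _ ≤ ∑ i', ∑ j', (M i' j') ^ 2 :=
        Finset.single_le_sum (fun k _ => Finset.sum_nonneg fun l _ => sq_nonneg (M k l))
          (Finset.mem_univ i)

lemma quad_single (n:ℕ) (M : Matrix (Fin n) (Fin n) ℝ) (i : Fin n) :
    (Pi.single i 1 : Fin n → ℝ) ⬝ᵥ M *ᵥ (Pi.single i 1) = M i i := by
  simp [dotProduct, Matrix.mulVec, Pi.single_apply]

lemma quad_pair (n:ℕ) (M : Matrix (Fin n) (Fin n) ℝ) (i j : Fin n) (c : ℝ) :
    ((Pi.single i 1 + Pi.single j c : Fin n → ℝ)) ⬝ᵥ M *ᵥ (Pi.single i 1 + Pi.single j c)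
      = M i i + c * M i j + c * M j i + c^2 * M j j := by
  simp [dotProduct, Matrix.mulVec, Pi.single_apply, mul_add, add_mul,
    Finset.sum_add_distrib]
  ring

lemma pucci_entry_bound {n : ℕ} {lam Lam : ℝ} (hlam : 0 < lam) (hle : lam ≤ Lam)
    {A : Matrix (Fin n) (Fin n) ℝ} (hA : A ∈ pucciSet n lam Lam) (i j : Fin n) :
    |A i j| ≤ Lam := by
  obtain ⟨hsymm, hP, hQ⟩ := hA
  -- diagonal bounds
  have hdiag : ∀ k, lam ≤ A k k ∧ A k k ≤ Lam := by
    intro k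
    have h1 := hP.dotProduct_mulVec_nonneg (Pi.single k 1)
    have h2 := hQ.dotProduct_mulVec_nonneg (Pi.single k 1)
    rw [star_trivial] at h1 h2
    rw [quad_single] at h1
    rw [quad_single] at h2
    simp [Matrix.sub_apply, Matrix.smul_apply, Matrix.one_apply] at h1 h2
    constructor <;> linarith
  by_cases hij : i = j
  · subst hij
    rcases hdiag i with ⟨h1, h2⟩
    rw [abs_le]; constructor <;> nlinarith
  · -- off diagonal: use P = A - lam • 1
    have hsym' : A j i = A i j := by
      have := hsymm; rw [Matrix.IsSymm] at this
      calc A j i = Aᵀ i j := rfl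
        _ = A i j := by rw [this]
    have key : ∀ c : ℝ, 0 ≤ (A i i - lam) + 2 * c * A i j + c^2 * (A j j - lam) := by
      intro c
      have h := hP.dotProduct_mulVec_nonneg (Pi.single i 1 + Pi.single j c)
      rw [star_trivial, quad_pair] at h
      simp only [Matrix.sub_apply, Matrix.smul_apply, Matrix.one_apply, smul_eq_mul,
        hij, Ne.symm hij, if_false, if_true, eq_self_iff_true, mul_one, mul_zero,
        sub_zero] at h
      rw [hsym'] at h
      linarith
    rcases hdiag i with ⟨hi1, hi2⟩
    rcases hdiag j with ⟨hj1, hj2⟩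
    have k1 := key 1
    have k2 := key (-1)
    rw [abs_le]; constructor <;> nlinarith

lemma neg_trace_bound {n : ℕ} {lam Lam : ℝ} (hlam : 0 < lam) (hle : lam ≤ Lam)
    {A : Matrix (Fin n) (Fin n) ℝ} (hA : A ∈ pucciSet n lam Lam)
    (M : Matrix (Fin n) (Fin n) ℝ) :
    |-(A * M).trace| ≤ Lam * n^2 * frobNorm n M := by
  rw [abs_neg]
  have htr : (A * M).trace = ∑ i, ∑ j, A i j * M j i := by
    simp [Matrix.trace, Matrix.mul_apply, Matrix.diag]
  rw [htr]
  calc |∑ i, ∑ j, A i j * M j i| ≤ ∑ i, ∑ j, |A i j * M j i| := by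
        refine (Finset.abs_sum_le_sum_abs _ _).trans ?_
        exact Finset.sum_le_sum fun i _ => Finset.abs_sum_le_sum_abs _ _
    _ ≤ ∑ i : Fin n, ∑ j : Fin n, Lam * frobNorm n M := by
        refine Finset.sum_le_sum fun i _ => Finset.sum_le_sum fun j _ => ?_
        rw [abs_mul]
        exact mul_le_mul (pucci_entry_bound hlam hle hA i j)
          (abs_entry_le_frobNorm n M j i) (abs_nonneg _)
          (le_trans hlam.le hle)
    _ = Lam * n^2 * frobNorm n M := by
        simp [Finset.sum_const]
        ring

lemma pucciSet_nonempty {n : ℕ} {lam Lam : ℝ} (hlam : 0 < lam) (hle : lam ≤ Lam) :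
    (pucciSet n lam Lam).Nonempty := by
  refine ⟨lam • 1, ?_, ?_, ?_⟩
  · exact (Matrix.isSymm_one).smul lam
  · simpa using Matrix.PosSemidef.zero
  · have : Lam • (1 : Matrix (Fin n) (Fin n) ℝ) - lam • 1 = (Lam - lam) • 1 := by
      rw [sub_smul]
    rw [this]
    apply Matrix.PosSemidef.of_dotProduct_mulVec_nonneg
    · rw [Matrix.IsHermitian]
      ext i j
      simp [Matrix.one_apply, Matrix.conjTranspose_apply]
      split <;> simp_all [eq_comm]
    · intro x
      simp only [star_trivial, Matrix.smul_mulVec, Matrix.one_mulVec,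
        dotProduct_smul, smul_eq_mul]
      have : (0:ℝ) ≤ x ⬝ᵥ x := by
        simp only [dotProduct]
        exact Finset.sum_nonneg fun i _ => mul_self_nonneg _
      nlinarith

lemma pucciPlus_le {n : ℕ} {lam Lam : ℝ} (hlam : 0 < lam) (hle : lam ≤ Lam)
    (M : Matrix (Fin n) (Fin n) ℝ) :
    pucciPlus n lam Lam M ≤ Lam * n^2 * frobNorm n M := by
  apply Real.sSup_le
  · rintro x ⟨A, hA, rfl⟩
    exact (abs_le.1 (neg_trace_bound hlam hle hA M)).2
  · have h1 : (0:ℝ) ≤ Lam := le_trans hlam.le hle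
    have h2 := frobNorm_nonneg n M
    have h3 : (0:ℝ) ≤ (n:ℝ)^2 := sq_nonneg _
    exact mul_nonneg (mul_nonneg h1 h3) h2

lemma pucciMinus_ge {n : ℕ} {lam Lam : ℝ} (hlam : 0 < lam) (hle : lam ≤ Lam)
    (M : Matrix (Fin n) (Fin n) ℝ) :
    -(Lam * n^2 * frobNorm n M) ≤ pucciMinus n lam Lam M := by
  apply le_csInf ((pucciSet_nonempty hlam hle).image _)
  rintro b ⟨A, hA, rfl⟩
  exact (abs_le.1 (neg_trace_bound hlam hle hA M)).1

section hess
variable {n : ℕ} {u v w : EuclideanSpace ℝ (Fin n) → ℝ}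

lemma inner_cd (hv : ContDiff ℝ 2 v) (s : EuclideanSpace ℝ (Fin n)) :
    ContDiff ℝ 1 (fun y => fderiv ℝ v y s) :=
  (hv.fderiv_right (by norm_num)).clm_apply contDiff_const

lemma hessian_entry_eq (hu : ContDiff ℝ 2 u) (x : EuclideanSpace ℝ (Fin n)) (i j : Fin n) :
    hessianMatrix n u x i j =
      (fderiv ℝ (fderiv ℝ u) x (EuclideanSpace.single i 1)) (EuclideanSpace.single j 1) := by
  have hfd : ContDiff ℝ 1 (fderiv ℝ u) := hu.fderiv_right (by norm_num)
  have h1 : DifferentiableAt ℝ (fderiv ℝ u) x := (hfd.differentiable one_ne_zero).differentiableAt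
  have h2 : DifferentiableAt ℝ (fun _ : EuclideanSpace ℝ (Fin n) =>
      (EuclideanSpace.single j 1 : EuclideanSpace ℝ (Fin n))) x := differentiableAt_const _
  show fderiv ℝ (fun y => fderiv ℝ u y (EuclideanSpace.single j 1)) x (EuclideanSpace.single i 1) = _
  rw [fderiv_clm_apply h1 h2]
  simp

lemma hessian_isSymm (hu : ContDiff ℝ 2 u) (x : EuclideanSpace ℝ (Fin n)) :
    (hessianMatrix n u x).IsSymm := by
  have hfd : ContDiff ℝ 1 (fderiv ℝ u) := hu.fderiv_right (by norm_num)
  have hdiff : Differentiable ℝ u := hu.differentiable (by norm_num)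
  have hsec := second_derivative_symmetric (f := u) (f' := fderiv ℝ u)
    (f'' := fderiv ℝ (fderiv ℝ u) x) (fun y => (hdiff y).hasFDerivAt)
    ((hfd.differentiable one_ne_zero x).hasFDerivAt)
  rw [Matrix.IsSymm]
  ext i j
  rw [Matrix.transpose_apply, hessian_entry_eq hu x i j, hessian_entry_eq hu x j i, hsec]

lemma hessian_entry_continuous (hu : ContDiff ℝ 2 u) (i j : Fin n) :
    Continuous (fun x => hessianMatrix n u x i j) := by
  have hfd : ContDiff ℝ 1 (fderiv ℝ u) := hu.fderiv_right (by norm_num)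
  have hc : Continuous (fderiv ℝ (fderiv ℝ u)) := hfd.continuous_fderiv one_ne_zero
  have : Continuous fun x => (fderiv ℝ (fderiv ℝ u) x (EuclideanSpace.single i 1))
      (EuclideanSpace.single j 1) :=
    ((hc.clm_apply continuous_const).clm_apply continuous_const)
  refine this.congr fun x => ?_
  rw [hessian_entry_eq hu x i j]

lemma hessian_sub (hv : ContDiff ℝ 2 v) (hw : ContDiff ℝ 2 w) (x : EuclideanSpace ℝ (Fin n)) :
    hessianMatrix n (v - w) x = hessianMatrix n v x - hessianMatrix n w x := by
  ext i j
  have hdv : Differentiable ℝ v := hv.differentiable (by norm_num)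
  have hdw : Differentiable ℝ w := hw.differentiable (by norm_num)
  have heq : (fun y => fderiv ℝ (v - w) y (EuclideanSpace.single j 1)) =
      fun y => fderiv ℝ v y (EuclideanSpace.single j 1)
        - fderiv ℝ w y (EuclideanSpace.single j 1) := by
    funext y
    have : fderiv ℝ (v - w) y = fderiv ℝ v y - fderiv ℝ w y := by
      rw [show v - w = fun z => v z - w z from rfl, fderiv_fun_sub (hdv y) (hdw y)]
    rw [this, ContinuousLinearMap.sub_apply]
  show fderiv ℝ (fun y => fderiv ℝ (v - w) y (EuclideanSpace.single j 1)) x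
      (EuclideanSpace.single i 1) = _
  rw [heq, fderiv_fun_sub (((inner_cd hv _).differentiable one_ne_zero) x)
    (((inner_cd hw _).differentiable one_ne_zero) x), ContinuousLinearMap.sub_apply]
  rfl

lemma gradient_sub' (hv : ContDiff ℝ 2 v) (hw : ContDiff ℝ 2 w) (x : EuclideanSpace ℝ (Fin n)) :
    gradient (v - w) x = gradient v x - gradient w x := by
  unfold gradient
  rw [show v - w = fun z => v z - w z from rfl,
    fderiv_fun_sub ((hv.differentiable (by norm_num)) x) ((hw.differentiable (by norm_num)) x),
    map_sub]

lemma gradient_continuous (hu : ContDiff ℝ 2 u) : Continuous (gradient u) := by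
  unfold gradient
  exact (InnerProductSpace.toDual ℝ _).symm.continuous.comp
    (hu.continuous_fderiv (by norm_num))
end hess

lemma two_max_bound (q : ℝ) (hq : 0 < q) (a b : ℝ≥0∞) :
    (a + b) ^ q ≤ 2 ^ q * (a ^ q + b ^ q) := by
  rcases le_total a b with hab | hab
  · calc (a + b) ^ q ≤ (2 * b) ^ q := by
          apply ENNReal.rpow_le_rpow _ hq.le
          rw [two_mul]; exact add_le_add_left hab b
      _ = 2 ^ q * b ^ q := ENNReal.mul_rpow_of_nonneg _ _ hq.le
      _ ≤ 2 ^ q * (a ^ q + b ^ q) := mul_le_mul_right le_add_self _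
  · calc (a + b) ^ q ≤ (2 * a) ^ q := by
          apply ENNReal.rpow_le_rpow _ hq.le
          rw [two_mul]; exact add_le_add_right hab a
      _ = 2 ^ q * a ^ q := ENNReal.mul_rpow_of_nonneg _ _ hq.le
      _ ≤ 2 ^ q * (a ^ q + b ^ q) := mul_le_mul_right le_self_add _

lemma eLpNorm_le_two_mul {α : Type*} [MeasurableSpace α] {μ : Measure α} {p : ℝ≥0∞}
    (hp1 : 1 ≤ p) (hpt : p ≠ ∞) {φ ψ h : α → ℝ} (hh : AEStronglyMeasurable h μ)
    (hb : ∀ᵐ x ∂μ, |φ x| ≤ |ψ x| + |h x|) :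
    eLpNorm φ p μ ≤ 2 * (eLpNorm ψ p μ + eLpNorm h p μ) := by
  have hp0 : p ≠ 0 := (lt_of_lt_of_le zero_lt_one hp1).ne'
  set q := p.toReal with hqdef
  have hq1 : 1 ≤ q := by
    rw [← ENNReal.toReal_one]
    exact ENNReal.toReal_mono hpt hp1
  have hq0 : 0 < q := lt_of_lt_of_le zero_lt_one hq1
  rw [eLpNorm_eq_lintegral_rpow_enorm_toReal hp0 hpt, eLpNorm_eq_lintegral_rpow_enorm_toReal hp0 hpt,
    eLpNorm_eq_lintegral_rpow_enorm_toReal hp0 hpt]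
  have hBmeas : AEMeasurable (fun x => (‖h x‖₊ : ℝ≥0∞) ^ q) μ :=
    (hh.enorm.pow_const q)
  have step1 : ∫⁻ x, (‖φ x‖₊ : ℝ≥0∞) ^ q ∂μ ≤
      ∫⁻ x, 2 ^ q * ((‖ψ x‖₊ : ℝ≥0∞) ^ q + (‖h x‖₊ : ℝ≥0∞) ^ q) ∂μ := by
    apply lintegral_mono_ae
    filter_upwards [hb] with x hx
    have e1 : (‖φ x‖₊ : ℝ≥0∞) ≤ (‖ψ x‖₊ : ℝ≥0∞) + ‖h x‖₊ := by
      rw [← enorm_eq_nnnorm, ← ofReal_norm, ← enorm_eq_nnnorm, ← ofReal_norm, ← enorm_eq_nnnorm, ← ofReal_norm,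
        ← ENNReal.ofReal_add (norm_nonneg _) (norm_nonneg _)]
      apply ENNReal.ofReal_le_ofReal
      simpa [Real.norm_eq_abs] using hx
    calc (‖φ x‖₊ : ℝ≥0∞) ^ q ≤ ((‖ψ x‖₊ : ℝ≥0∞) + ‖h x‖₊) ^ q :=
          ENNReal.rpow_le_rpow e1 hq0.le
      _ ≤ 2 ^ q * ((‖ψ x‖₊ : ℝ≥0∞) ^ q + (‖h x‖₊ : ℝ≥0∞) ^ q) := two_max_bound q hq0 _ _
  have step2 : ∫⁻ x, 2 ^ q * ((‖ψ x‖₊ : ℝ≥0∞) ^ q + (‖h x‖₊ : ℝ≥0∞) ^ q) ∂μ =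
      2 ^ q * ((∫⁻ x, (‖ψ x‖₊ : ℝ≥0∞) ^ q ∂μ) + ∫⁻ x, (‖h x‖₊ : ℝ≥0∞) ^ q ∂μ) := by
    rw [lintegral_const_mul' _ _ (by
      exact ENNReal.rpow_ne_top_of_nonneg hq0.le (by norm_num)),
      lintegral_add_right' _ hBmeas]
  calc (∫⁻ x, (‖φ x‖₊ : ℝ≥0∞) ^ q ∂μ) ^ (1/q)
      ≤ (2 ^ q * ((∫⁻ x, (‖ψ x‖₊ : ℝ≥0∞) ^ q ∂μ) + ∫⁻ x, (‖h x‖₊ : ℝ≥0∞) ^ q ∂μ)) ^ (1/q) := by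
        apply ENNReal.rpow_le_rpow _ (by positivity)
        exact step1.trans (le_of_eq step2)
    _ = 2 * ((∫⁻ x, (‖ψ x‖₊ : ℝ≥0∞) ^ q ∂μ) + ∫⁻ x, (‖h x‖₊ : ℝ≥0∞) ^ q ∂μ) ^ (1/q) := by
        rw [ENNReal.mul_rpow_of_nonneg _ _ (by positivity), ← ENNReal.rpow_mul,
          mul_one_div, div_self hq0.ne', ENNReal.rpow_one]
    _ ≤ 2 * ((∫⁻ x, (‖ψ x‖₊ : ℝ≥0∞) ^ q ∂μ) ^ (1/q) + (∫⁻ x, (‖h x‖₊ : ℝ≥0∞) ^ q ∂μ) ^ (1/q)) := by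
        apply mul_le_mul_right
        exact ENNReal.rpow_add_le_add_rpow _ _ (by positivity) (by
          rw [div_le_one hq0]; exact hq1)

lemma eLpNorm_cont_lt_top {n : ℕ} {p : ℝ≥0∞} {Ω : Set (EuclideanSpace ℝ (Fin n))}
    (hopen : IsOpen Ω) (hbdd : Bornology.IsBounded Ω) {q : EuclideanSpace ℝ (Fin n) → ℝ}
    (hq : Continuous q) : eLpNorm q p (volume.restrict Ω) < ⊤ := by
  obtain ⟨Cb, hCb⟩ := (hbdd.isCompact_closure).exists_bound_of_continuousOn hq.continuousOn
  refine lt_of_le_of_lt (eLpNorm_le_of_ae_bound (C := Cb) ?_) ?_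
  · exact ae_restrict_of_forall_mem hopen.measurableSet fun x hx => hCb x (subset_closure hx)
  · rw [Measure.restrict_apply_univ]
    have hμ : volume Ω ≠ ⊤ :=
      (lt_of_le_of_lt (measure_mono subset_closure) (hbdd.isCompact_closure.measure_lt_top)).ne
    exact ENNReal.mul_lt_top (ENNReal.rpow_lt_top_of_nonneg (by positivity) hμ)
      ENNReal.ofReal_lt_top


section master
variable {n : ℕ}

lemma psi_nonneg (Ω : Set (EuclideanSpace ℝ (Fin n))) (C : ℝ) (hC : 0 ≤ C)
    (g f : EuclideanSpace ℝ (Fin n) → ℝ)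
    (F : EuclideanSpace ℝ (Fin n) → ℝ → EuclideanSpace ℝ (Fin n) →
      Matrix (Fin n) (Fin n) ℝ → ℝ)
    (v : EuclideanSpace ℝ (Fin n) → ℝ) : 0 ≤ Psi n Ω C g f F v := by
  unfold Psi
  refine add_nonneg (Real.sSup_nonneg ?_) (mul_nonneg hC ENNReal.toReal_nonneg)
  rintro _ ⟨x, _, rfl⟩
  exact abs_nonneg _

lemma strongNorm_first_le (Ω : Set (EuclideanSpace ℝ (Fin n)))
    (w : EuclideanSpace ℝ (Fin n) → ℝ) :
    sSup ((fun x => |w x|) '' closure Ω) ≤ strongNorm n Ω w := by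
  unfold strongNorm
  have h1 : (0:ℝ) ≤ (eLpNorm w ↑n (volume.restrict Ω)).toReal := ENNReal.toReal_nonneg
  have h2 : (0:ℝ) ≤ (eLpNorm (fun x => ‖gradient w x‖) ↑n (volume.restrict Ω)).toReal :=
    ENNReal.toReal_nonneg
  have h3 : (0:ℝ) ≤ (eLpNorm (fun x => frobNorm n (hessianMatrix n w x)) ↑n
      (volume.restrict Ω)).toReal := ENNReal.toReal_nonneg
  linarith

set_option maxHeartbeats 1000000 in
lemma psi_master (hn : 1 ≤ n) {lam Lam gam mu C : ℝ} (hlam : 0 < lam) (hle : lam ≤ Lam)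
    (hgam : 0 ≤ gam) (hmu : 0 ≤ mu) (hC : 0 < C)
    {Ω : Set (EuclideanSpace ℝ (Fin n))} (hopen : IsOpen Ω) (hbdd : Bornology.IsBounded Ω)
    (f g : EuclideanSpace ℝ (Fin n) → ℝ) (B : ℝ) (hg : ∀ x ∈ frontier Ω, |g x| ≤ B)
    (F : EuclideanSpace ℝ (Fin n) → ℝ → EuclideanSpace ℝ (Fin n) →
      Matrix (Fin n) (Fin n) ℝ → ℝ)
    (hFstruct : ∀ᵐ x ∂(volume.restrict Ω), ∀ (r s : ℝ) (p q : EuclideanSpace ℝ (Fin n))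
      (M N : Matrix (Fin n) (Fin n) ℝ), M.IsSymm → N.IsSymm →
      pucciMinus n lam Lam (M - N) - gam * ‖p - q‖ - mu * max (s - r) 0 ≤
        F x r p M - F x s q N ∧
      F x r p M - F x s q N ≤
        pucciPlus n lam Lam (M - N) + gam * ‖p - q‖ + mu * max (r - s) 0)
    {v w : EuclideanSpace ℝ (Fin n) → ℝ} (hv : ContDiff ℝ 2 v) (hw : ContDiff ℝ 2 w) :
    Psi n Ω C g f F w ≤ 2 * Psi n Ω C g f F v +
      (1 + 2 * C * (Lam * (n:ℝ)^2 + gam + mu)) * strongNorm n Ω (v - w) := by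
  have hp1 : (1:ℝ≥0∞) ≤ (n : ℝ≥0∞) := by exact_mod_cast hn
  have hpt : ((n:ℕ) : ℝ≥0∞) ≠ ⊤ := ENNReal.natCast_ne_top n
  set K : ℝ := Lam * (n:ℝ)^2 + gam + mu with hKdef
  have hLam : 0 < Lam := lt_of_lt_of_le hlam hle
  have hK : 0 ≤ K := by positivity
  have cvw : ContDiff ℝ 2 (v - w) := hv.sub hw
  set f1 : EuclideanSpace ℝ (Fin n) → ℝ := fun x => frobNorm n (hessianMatrix n (v - w) x)
    with hf1def
  set f2 : EuclideanSpace ℝ (Fin n) → ℝ := fun x => ‖gradient (v - w) x‖ with hf2def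
  set f3 : EuclideanSpace ℝ (Fin n) → ℝ := fun x => |(v - w) x| with hf3def
  have hf1c : Continuous f1 := by
    have hsum : Continuous fun x => (∑ i, ∑ j, (hessianMatrix n (v - w) x i j)^2) :=
      continuous_finset_sum _ fun i _ => continuous_finset_sum _ fun j _ =>
        ((hessian_entry_continuous cvw i j).pow 2)
    exact Real.continuous_sqrt.comp hsum
  have hf2c : Continuous f2 := (gradient_continuous cvw).norm
  have hf3c : Continuous f3 := (cvw.continuous).abs
  have hf1n : ∀ x, 0 ≤ f1 x := fun x => frobNorm_nonneg n _
  have hf2n : ∀ x, 0 ≤ f2 x := fun x => norm_nonneg _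
  have hf3n : ∀ x, 0 ≤ f3 x := fun x => abs_nonneg _
  set h : EuclideanSpace ℝ (Fin n) → ℝ := fun x => K * (f1 x + f2 x + f3 x) with hhdef
  have hhc : Continuous h := continuous_const.mul ((hf1c.add hf2c).add hf3c)
  have hhn : ∀ x, 0 ≤ h x := fun x => mul_nonneg hK (by
    have := hf1n x; have := hf2n x; have := hf3n x; linarith)
  -- a.e. pointwise bound on the difference of the operators
  have haept : ∀ᵐ x ∂(volume.restrict Ω),
      |opApply n F v x - opApply n F w x| ≤ h x := by
    filter_upwards [hFstruct] with x hx
    obtain ⟨hlow, hup⟩ := hx (v x) (w x) (gradient v x) (gradient w x)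
      (hessianMatrix n v x) (hessianMatrix n w x) (hessian_isSymm hv x) (hessian_isSymm hw x)
    have hfr : frobNorm n (hessianMatrix n v x - hessianMatrix n w x) = f1 x := by
      show _ = frobNorm n (hessianMatrix n (v - w) x)
      rw [hessian_sub hv hw x]
    have hgr : ‖gradient v x - gradient w x‖ = f2 x := by
      show _ = ‖gradient (v - w) x‖
      rw [gradient_sub' hv hw x]
    have habs : |v x - w x| = f3 x := rfl
    have hpp := pucciPlus_le hlam hle (hessianMatrix n v x - hessianMatrix n w x)
    have hpm := pucciMinus_ge hlam hle (hessianMatrix n v x - hessianMatrix n w x)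
    rw [hfr] at hpp hpm
    have hmax1 : max (v x - w x) 0 ≤ f3 x := by
      rw [← habs]; exact max_le (le_abs_self _) (abs_nonneg _)
    have hmax2 : max (w x - v x) 0 ≤ f3 x := by
      rw [← habs, abs_sub_comm]; exact max_le (le_abs_self _) (abs_nonneg _)
    have h1 := hf1n x
    have h2 := hf2n x
    have h3 := hf3n x
    have hn2 : (0:ℝ) ≤ (n:ℝ)^2 := sq_nonneg _
    have hop : opApply n F v x - opApply n F w x = F x (v x) (gradient v x)
        (hessianMatrix n v x) - F x (w x) (gradient w x) (hessianMatrix n w x) := rfl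
    rw [hop, abs_le]
    rw [hgr] at hlow hup
    have hhx : h x = K * (f1 x + f2 x + f3 x) := rfl
    have e1 : mu * ((v x - w x) ⊔ 0) ≤ mu * f3 x := mul_le_mul_of_nonneg_left hmax1 hmu
    have e2 : mu * ((w x - v x) ⊔ 0) ≤ mu * f3 x := mul_le_mul_of_nonneg_left hmax2 hmu
    have p1 : 0 ≤ gam * f1 x := mul_nonneg hgam h1
    have p2 : 0 ≤ mu * f1 x := mul_nonneg hmu h1
    have p3 : 0 ≤ Lam * (n:ℝ)^2 * f2 x := mul_nonneg (mul_nonneg hLam.le hn2) h2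
    have p4 : 0 ≤ mu * f2 x := mul_nonneg hmu h2
    have p5 : 0 ≤ Lam * (n:ℝ)^2 * f3 x := mul_nonneg (mul_nonneg hLam.le hn2) h3
    have p6 : 0 ≤ gam * f3 x := mul_nonneg hgam h3
    rw [hhx, hKdef]
    constructor
    · linarith [hlow, hpm, e2, p1, p2, p3, p4, p5, p6]
    · linarith [hup, hpp, e1, p1, p2, p3, p4, p5, p6]
  -- seminorm quantities
  set Ev := eLpNorm (fun x => f x - opApply n F v x) (n : ℝ≥0∞) (volume.restrict Ω) with hEv
  set Ew := eLpNorm (fun x => f x - opApply n F w x) (n : ℝ≥0∞) (volume.restrict Ω) with hEw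
  set Eh := eLpNorm h (n : ℝ≥0∞) (volume.restrict Ω) with hEh
  have hEh_lt : Eh < ⊤ := eLpNorm_cont_lt_top hopen hbdd hhc
  have hEwle : Ew ≤ 2 * (Ev + Eh) := by
    refine eLpNorm_le_two_mul hp1 hpt hhc.aestronglyMeasurable ?_
    filter_upwards [haept] with x hx
    have := abs_sub_le (f x) (opApply n F v x) (opApply n F w x)
    rw [abs_of_nonneg (hhn x)]
    linarith [abs_sub_comm (opApply n F v x) (opApply n F w x) ▸ hx]
  have hEvle : Ev ≤ 2 * (Ew + Eh) := by
    refine eLpNorm_le_two_mul hp1 hpt hhc.aestronglyMeasurable ?_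
    filter_upwards [haept] with x hx
    have := abs_sub_le (f x) (opApply n F w x) (opApply n F v x)
    rw [abs_of_nonneg (hhn x)]
    rw [abs_sub_comm (opApply n F w x) (opApply n F v x)] at this
    linarith
  -- L^n bound for h in terms of the strong norm
  have hEhR : Eh.toReal ≤ K * strongNorm n Ω (v - w) := by
    have hsmul : h = K • (f1 + f2 + f3) := rfl
    have e1lt : eLpNorm f1 (n : ℝ≥0∞) (volume.restrict Ω) < ⊤ :=
      eLpNorm_cont_lt_top hopen hbdd hf1c
    have e2lt : eLpNorm f2 (n : ℝ≥0∞) (volume.restrict Ω) < ⊤ :=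
      eLpNorm_cont_lt_top hopen hbdd hf2c
    have e3lt : eLpNorm f3 (n : ℝ≥0∞) (volume.restrict Ω) < ⊤ :=
      eLpNorm_cont_lt_top hopen hbdd hf3c
    have hsum : eLpNorm (f1 + f2 + f3) (n : ℝ≥0∞) (volume.restrict Ω) ≤
        eLpNorm f1 (n : ℝ≥0∞) (volume.restrict Ω) + eLpNorm f2 (n : ℝ≥0∞) (volume.restrict Ω)
          + eLpNorm f3 (n : ℝ≥0∞) (volume.restrict Ω) := by
      refine le_trans (eLpNorm_add_le ((hf1c.add hf2c).aestronglyMeasurable)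
        (hf3c.aestronglyMeasurable) hp1) ?_
      exact add_le_add_left (eLpNorm_add_le hf1c.aestronglyMeasurable
        hf2c.aestronglyMeasurable hp1) _
    have hEheq : Eh = ‖K‖₊ * eLpNorm (f1 + f2 + f3) (n : ℝ≥0∞) (volume.restrict Ω) := by
      rw [hEh, hsmul, eLpNorm_const_smul]; rfl
    have hfin : eLpNorm f1 (n : ℝ≥0∞) (volume.restrict Ω)
        + eLpNorm f2 (n : ℝ≥0∞) (volume.restrict Ω)
        + eLpNorm f3 (n : ℝ≥0∞) (volume.restrict Ω) ≠ ⊤ := by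
      simp [ENNReal.add_ne_top, e1lt.ne, e2lt.ne, e3lt.ne]
    have htr : (eLpNorm (f1 + f2 + f3) (n : ℝ≥0∞) (volume.restrict Ω)).toReal ≤
        (eLpNorm f1 (n : ℝ≥0∞) (volume.restrict Ω)).toReal
        + (eLpNorm f2 (n : ℝ≥0∞) (volume.restrict Ω)).toReal
        + (eLpNorm f3 (n : ℝ≥0∞) (volume.restrict Ω)).toReal := by
      refine le_trans (ENNReal.toReal_mono hfin hsum) ?_
      rw [ENNReal.toReal_add (by simp [ENNReal.add_ne_top, e1lt.ne, e2lt.ne]) e3lt.ne,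
        ENNReal.toReal_add e1lt.ne e2lt.ne]
    have h3eq : eLpNorm f3 (n : ℝ≥0∞) (volume.restrict Ω) =
        eLpNorm (v - w) (n : ℝ≥0∞) (volume.restrict Ω) := by
      rw [hf3def]
      simp only [← Real.norm_eq_abs]
      exact eLpNorm_norm _
    have hsN : (eLpNorm f1 (n : ℝ≥0∞) (volume.restrict Ω)).toReal
        + (eLpNorm f2 (n : ℝ≥0∞) (volume.restrict Ω)).toReal
        + (eLpNorm f3 (n : ℝ≥0∞) (volume.restrict Ω)).toReal ≤ strongNorm n Ω (v - w) := by
      unfold strongNorm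
      have hD : (0:ℝ) ≤ sSup ((fun x => |(v - w) x|) '' closure Ω) :=
        Real.sSup_nonneg (by rintro _ ⟨x, _, rfl⟩; exact abs_nonneg _)
      rw [h3eq]
      rw [hf1def, hf2def]
      linarith
    rw [hEheq, ENNReal.toReal_mul]
    have : (‖K‖₊ : ℝ≥0∞).toReal = K := by
      simp [Real.norm_eq_abs, abs_of_nonneg hK]
    rw [this]
    exact mul_le_mul_of_nonneg_left (le_trans htr hsN) hK
  -- boundary supremum estimate
  have compact_cl : IsCompact (closure Ω) := hbdd.isCompact_closure
  have compact_fr : IsCompact (frontier Ω) :=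
    compact_cl.of_isClosed_subset isClosed_frontier frontier_subset_closure
  obtain ⟨Cv, hCv⟩ := compact_fr.exists_bound_of_continuousOn hv.continuous.continuousOn
  obtain ⟨Cvw, hCvw⟩ := compact_cl.exists_bound_of_continuousOn cvw.continuous.continuousOn
  have bdd1 : BddAbove ((fun x => |g x - v x|) '' frontier Ω) := by
    refine ⟨B + Cv, ?_⟩
    rintro _ ⟨x, hx, rfl⟩
    have h1 := hg x hx
    have h2 := hCv x hx
    rw [Real.norm_eq_abs] at h2
    calc |g x - v x| ≤ |g x| + |v x| := abs_sub _ _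
      _ ≤ B + Cv := add_le_add h1 h2
  have bdd2 : BddAbove ((fun x => |(v - w) x|) '' closure Ω) := by
    refine ⟨Cvw, ?_⟩
    rintro _ ⟨x, hx, rfl⟩
    have h2 := hCvw x hx
    rwa [Real.norm_eq_abs] at h2
  set D := sSup ((fun x => |(v - w) x|) '' closure Ω) with hD
  have hDnn : 0 ≤ D := Real.sSup_nonneg (by rintro _ ⟨x, _, rfl⟩; exact abs_nonneg _)
  have hSv : 0 ≤ sSup ((fun x => |g x - v x|) '' frontier Ω) :=
    Real.sSup_nonneg (by rintro _ ⟨x, _, rfl⟩; exact abs_nonneg _)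
  have hSw : sSup ((fun x => |g x - w x|) '' frontier Ω) ≤
      sSup ((fun x => |g x - v x|) '' frontier Ω) + D := by
    apply Real.sSup_le _ (by linarith)
    rintro _ ⟨x, hx, rfl⟩
    have t1 : |g x - w x| ≤ |g x - v x| + |v x - w x| := abs_sub_le _ _ _
    have t2 : |g x - v x| ≤ sSup ((fun y => |g y - v y|) '' frontier Ω) :=
      le_csSup bdd1 ⟨x, hx, rfl⟩
    have t3 : |v x - w x| ≤ D :=
      le_csSup bdd2 ⟨x, frontier_subset_closure hx, rfl⟩
    linarith
  have hDle : D ≤ strongNorm n Ω (v - w) := strongNorm_first_le Ω (v - w)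
  have hsNnn : 0 ≤ strongNorm n Ω (v - w) := le_trans hDnn hDle
  -- combine
  unfold Psi
  rw [← hEv, ← hEw]
  by_cases hcase : Ev = ⊤
  · have hEwtop : Ew = ⊤ := by
      by_contra hne
      have : Ev ≠ ⊤ := by
        intro hc
        rw [hc] at hEvle
        have : 2 * (Ew + Eh) ≠ ⊤ :=
          ENNReal.mul_ne_top (by norm_num) (ENNReal.add_ne_top.2 ⟨hne, hEh_lt.ne⟩)
        exact this (top_le_iff.1 hEvle)
      exact this hcase
    rw [hEwtop, hcase]
    simp only [ENNReal.toReal_top, mul_zero, add_zero]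
    calc sSup ((fun x => |g x - w x|) '' frontier Ω)
        ≤ sSup ((fun x => |g x - v x|) '' frontier Ω) + D := hSw
      _ ≤ 2 * sSup ((fun x => |g x - v x|) '' frontier Ω) +
          (1 + 2 * C * K) * strongNorm n Ω (v - w) := by
          nlinarith [hSv, hDle, hsNnn,
            mul_nonneg (mul_nonneg (mul_nonneg (by norm_num : (0:ℝ) ≤ 2) hC.le) hK) hsNnn]
  · have hEwfin : Ew ≠ ⊤ := by
      intro hc
      rw [hc] at hEwle
      have : 2 * (Ev + Eh) ≠ ⊤ :=
        ENNReal.mul_ne_top (by norm_num) (ENNReal.add_ne_top.2 ⟨hcase, hEh_lt.ne⟩)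
      exact this (top_le_iff.1 hEwle)
    have h2fin : (2 : ℝ≥0∞) * (Ev + Eh) ≠ ⊤ :=
      ENNReal.mul_ne_top (by norm_num) (ENNReal.add_ne_top.2 ⟨hcase, hEh_lt.ne⟩)
    have hTw : Ew.toReal ≤ 2 * (Ev.toReal + Eh.toReal) := by
      have := ENNReal.toReal_mono h2fin hEwle
      rwa [ENNReal.toReal_mul, ENNReal.toReal_add hcase hEh_lt.ne,
        ENNReal.toReal_ofNat] at this
    have hTv : 0 ≤ Ev.toReal := ENNReal.toReal_nonneg
    have hEhnn : 0 ≤ Eh.toReal := ENNReal.toReal_nonneg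
    have a1 : C * Ew.toReal ≤ C * (2 * (Ev.toReal + Eh.toReal)) :=
      mul_le_mul_of_nonneg_left hTw hC.le
    have a2 : 2 * C * Eh.toReal ≤ 2 * C * (K * strongNorm n Ω (v - w)) :=
      mul_le_mul_of_nonneg_left hEhR (by positivity)
    nlinarith [hSw, hDle, hSv, hsNnn, a1, a2, mul_nonneg hC.le hTv]

end master


/-- Convergence of the conforming minimal residual method (classical regularity):
if the infimum of `Ψ` over `C²` functions is zero and the discrete spaces `V_j` are
asymptotically dense, then the discrete minimizers satisfy `Ψ(u_j) → 0`; if moreover a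
function `u` satisfies the stability bound `sup_Ω |u − v| ≤ Ψ(v)` for all `C²` `v`, then
`u_j → u` uniformly on `Ω`. -/
theorem convergence_of_conforming_FEM
    (n : ℕ) (hn : 1 ≤ n) (lam Lam gam mu C : ℝ) (hlam : 0 < lam) (hle : lam ≤ Lam)
    (hgam : 0 ≤ gam) (hmu : 0 ≤ mu) (hC : 0 < C)
    (Ω : Set (EuclideanSpace ℝ (Fin n))) (hopen : IsOpen Ω)
    (hbdd : Bornology.IsBounded Ω) (hne : Ω.Nonempty)
    (f : EuclideanSpace ℝ (Fin n) → ℝ) (hf : MemLp f n (volume.restrict Ω))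
    (g : EuclideanSpace ℝ (Fin n) → ℝ) (B : ℝ) (hg : ∀ x ∈ frontier Ω, |g x| ≤ B)
    (F : EuclideanSpace ℝ (Fin n) → ℝ → EuclideanSpace ℝ (Fin n) →
      Matrix (Fin n) (Fin n) ℝ → ℝ)
    (hFstruct : ∀ᵐ x ∂(volume.restrict Ω), ∀ (r s : ℝ) (p q : EuclideanSpace ℝ (Fin n))
      (M N : Matrix (Fin n) (Fin n) ℝ), M.IsSymm → N.IsSymm →
      pucciMinus n lam Lam (M - N) - gam * ‖p - q‖ - mu * max (s - r) 0 ≤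
        F x r p M - F x s q N ∧
      F x r p M - F x s q N ≤
        pucciPlus n lam Lam (M - N) + gam * ‖p - q‖ + mu * max (r - s) 0)
    (hinf : sInf (Psi n Ω C g f F '' {v | ContDiff ℝ 2 v}) = 0)
    (V : ℕ → Set (EuclideanSpace ℝ (Fin n) → ℝ))
    (hVX : ∀ j, ∀ v ∈ V j, ContDiff ℝ 2 v)
    (hdense : ∀ v : EuclideanSpace ℝ (Fin n) → ℝ, ContDiff ℝ 2 v →
      Filter.Tendsto (fun j => sInf ((fun w => strongNorm n Ω (v - w)) '' V j))
        Filter.atTop (nhds 0))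
    (u : ℕ → EuclideanSpace ℝ (Fin n) → ℝ)
    (hu : ∀ j, u j ∈ V j ∧ ∀ v ∈ V j, Psi n Ω C g f F (u j) ≤ Psi n Ω C g f F v) :
    Filter.Tendsto (fun j => Psi n Ω C g f F (u j)) Filter.atTop (nhds 0) ∧
    ∀ U : EuclideanSpace ℝ (Fin n) → ℝ,
      (∀ v : EuclideanSpace ℝ (Fin n) → ℝ, ContDiff ℝ 2 v →
        sSup ((fun x => |U x - v x|) '' Ω) ≤ Psi n Ω C g f F v) →
      Filter.Tendsto (fun j => sSup ((fun x => |U x - u j x|) '' Ω))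
        Filter.atTop (nhds 0) := by
  have hmain : Filter.Tendsto (fun j => Psi n Ω C g f F (u j)) Filter.atTop (nhds 0) := by
    rw [Metric.tendsto_atTop]
    intro ε hε
    set K' : ℝ := 1 + 2 * C * (Lam * (n:ℝ)^2 + gam + mu) with hK'def
    have hLam : 0 < Lam := lt_of_lt_of_le hlam hle
    have hK' : 0 < K' := by positivity
    -- choose a near-optimal C² function v
    have hne_img : (Psi n Ω C g f F '' {v | ContDiff ℝ 2 v}).Nonempty :=
      ⟨_, ⟨fun _ => (0:ℝ), show ContDiff ℝ 2 (fun _ : EuclideanSpace ℝ (Fin n) => (0:ℝ)) from contDiff_const, rfl⟩⟩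
    obtain ⟨_, ⟨v, hvmem, rfl⟩, hvlt⟩ := exists_lt_of_csInf_lt hne_img
      (show sInf _ < ε / 4 by rw [hinf]; positivity)
    -- choose J from density
    have hd := hdense v hvmem
    rw [Metric.tendsto_atTop] at hd
    obtain ⟨J, hJ⟩ := hd (ε / (4 * K')) (by positivity)
    refine ⟨J, fun j hj => ?_⟩
    have hsInf : sInf ((fun w => strongNorm n Ω (v - w)) '' V j) < ε / (4 * K') := by
      have := hJ j hj
      rw [Real.dist_eq, sub_zero] at this
      exact (le_abs_self _).trans_lt this
    have hVne : ((fun w => strongNorm n Ω (v - w)) '' V j).Nonempty :=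
      ⟨_, ⟨u j, (hu j).1, rfl⟩⟩
    obtain ⟨_, ⟨w, hwVj, rfl⟩, hwlt⟩ := exists_lt_of_csInf_lt hVne hsInf
    have hΨw := psi_master hn hlam hle hgam hmu hC hopen hbdd f g B hg F hFstruct
      hvmem (hVX j w hwVj)
    have h1 : Psi n Ω C g f F (u j) ≤ Psi n Ω C g f F w := (hu j).2 w hwVj
    have hnn : 0 ≤ Psi n Ω C g f F (u j) := psi_nonneg Ω C hC.le g f F (u j)
    rw [Real.dist_eq, sub_zero, abs_of_nonneg hnn]
    have hKmul : K' * strongNorm n Ω (v - w) < K' * (ε / (4 * K')) :=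
      mul_lt_mul_of_pos_left hwlt hK'
    have hKeq : K' * (ε / (4 * K')) = ε / 4 := by
      field_simp
    calc Psi n Ω C g f F (u j) ≤ Psi n Ω C g f F w := h1
      _ ≤ 2 * Psi n Ω C g f F v + K' * strongNorm n Ω (v - w) := hΨw
      _ < 2 * (ε / 4) + ε / 4 := by
          have := hKeq ▸ hKmul
          linarith
      _ < ε := by linarith
  refine ⟨hmain, fun U hstab => ?_⟩
  have key : ∀ j, sSup ((fun x => |U x - u j x|) '' Ω) ≤ Psi n Ω C g f F (u j) :=
    fun j => hstab (u j) (hVX j (u j) (hu j).1)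
  have nn : ∀ j, 0 ≤ sSup ((fun x => |U x - u j x|) '' Ω) :=
    fun j => Real.sSup_nonneg (by rintro _ ⟨x, _, rfl⟩; exact abs_nonneg _)
  exact squeeze_zero nn key hmain
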